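/- Let σ : ℝ → [0,1] be 2-admissible with associated point t_σ, and let t_{σ,id} ∈ ℝ satisfy σ'(t_{σ,id}) ≠ 0. Let f_id(x) = (R/σ'(t_{σ,id}))·(σ(x/R + t_{σ,id}) − σ(t_{σ,id})) and let f_mult be the product-approximating network f_mult(x,y) = (R²/(4σ''(t_σ)))·(σ(2(x+y)/R + t_σ) − 2σ((x+y)/R + t_σ) − σ(2(x−y)/R + t_σ) + 2σ((x−y)/R + t_σ)). Assume a ≥ 1 and R ≥ (‖σ''‖_∞ · a) / (2·|σ'(t_{σ,id})|). Then the network f_ReLU(x) = f_mult(f_id(x), σ(R·x)) satisfies |f_ReLU(x) − max{x, 0}| ≤ 56 · (max{‖σ''‖_∞, ‖σ'''‖_∞, 1} / min{2·|σ'(t_{σ,id})|, |σ''(t_σ)|, 1}) · a³ · (1/R) for all x ∈ [−a, a]. -/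

import Mathlib

open Real Set

/-- Supremum norm of a function `g : ℝ → ℝ`. -/
noncomputable def supNorm (g : ℝ → ℝ) : ℝ := ⨆ x : ℝ, |g x|

/-- A function `σ : ℝ → [0,1]` is 2-admissible with associated point `tσ`. -/
def TwoAdmissible (σ : ℝ → ℝ) (tσ : ℝ) : Prop :=
  (∀ x : ℝ, σ x ∈ Set.Icc (0 : ℝ) 1) ∧ Monotone σ ∧ (∃ L : NNReal, LipschitzWith L σ) ∧
  ContDiff ℝ 3 σ ∧
  (∀ k : ℕ, k ≤ 3 → ∃ B : ℝ, ∀ x : ℝ, |iteratedDeriv k σ x| ≤ B) ∧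
  deriv σ tσ ≠ 0 ∧ deriv (deriv σ) tσ ≠ 0 ∧
  (∀ y : ℝ, 0 < y → |σ y - 1| ≤ 1 / y) ∧ (∀ y : ℝ, y < 0 → |σ y| ≤ 1 / |y|)

/-! The three sub-networks are controlled by Taylor's theorem. `f_id` is a rescaled difference
quotient of `σ` at `tid`, exact up to `O(x² / R)`. In `f_mult` the combination
`σ(2s/R + t) - 2σ(s/R + t)` cancels the linear Taylor term, and polarisation
`(x + y)² - (x - y)² = 4xy` then recovers `xy` up to `O(|s|³ / R)`. The tail bounds of `σ` put
`x σ(Rx)` within `1 / R` of `max x 0`. The lower bound on `R` keeps `|f_id x| ≤ 2a`, so both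
arguments of `f_mult` stay where its error is controlled. -/

open Finset Nat

theorem abs_sub_taylor_le {f : ℝ → ℝ} {n : ℕ} (hf : ContDiff ℝ (n + 1) f) {C : ℝ}
    (hC : ∀ t, |iteratedDeriv (n + 1) f t| ≤ C) (x₀ x : ℝ) :
    |f x - ∑ k ∈ range (n + 1), iteratedDeriv k f x₀ / k ! * (x - x₀) ^ k|
      ≤ C * |x - x₀| ^ (n + 1) / (n + 1)! := by
  rcases eq_or_ne x₀ x with rfl | hx
  · simp [sum_range_succ']
  obtain ⟨y, -, hy⟩ := taylor_mean_remainder_lagrange_iteratedDeriv hx hf.contDiffOn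
  have htaylor : taylorWithinEval f n (uIcc x₀ x) x₀ x
      = ∑ k ∈ range (n + 1), iteratedDeriv k f x₀ / k ! * (x - x₀) ^ k := by
    rw [taylor_within_apply]
    refine sum_congr rfl fun k hk => ?_
    rw [iteratedDerivWithin_eq_iteratedDeriv (uniqueDiffOn_uIcc hx)
      (hf.contDiffAt.of_le (by exact_mod_cast (mem_range.mp hk).le)) left_mem_uIcc, smul_eq_mul]
    ring
  rw [← htaylor, hy, abs_div, abs_mul, abs_pow, abs_of_pos (by positivity : (0 : ℝ) < (n + 1)!)]
  gcongr
  exact hC y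

theorem abs_sub_sub_deriv_mul_le {f : ℝ → ℝ} (hf : ContDiff ℝ 2 f) {C : ℝ}
    (hC : ∀ t, |deriv (deriv f) t| ≤ C) (x₀ x : ℝ) :
    |f x - f x₀ - deriv f x₀ * (x - x₀)| ≤ C / 2 * (x - x₀) ^ 2 := by
  have := abs_sub_taylor_le (n := 1) hf (C := C) (by simpa [iteratedDeriv_eq_iterate] using hC) x₀ x
  convert this using 2 <;> simp [sum_range_succ, sq_abs] <;> ring

theorem abs_sub_sub_deriv_mul_sub_le {f : ℝ → ℝ} (hf : ContDiff ℝ 3 f) {C : ℝ}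
    (hC : ∀ t, |deriv (deriv (deriv f)) t| ≤ C) (x₀ x : ℝ) :
    |f x - f x₀ - deriv f x₀ * (x - x₀) - deriv (deriv f) x₀ / 2 * (x - x₀) ^ 2|
      ≤ C / 6 * |x - x₀| ^ 3 := by
  have := abs_sub_taylor_le (n := 2) hf (C := C) (by simpa [iteratedDeriv_eq_iterate] using hC) x₀ x
  convert this using 2 <;> simp [sum_range_succ, iteratedDeriv_eq_iterate, factorial] <;> ring

noncomputable def identityNetwork (σ : ℝ → ℝ) (t R x : ℝ) : ℝ :=
  R / deriv σ t * (σ (x / R + t) - σ t)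

noncomputable def productNetwork (σ : ℝ → ℝ) (t R x y : ℝ) : ℝ :=
  R ^ 2 / (4 * deriv (deriv σ) t) *
    (σ (2 * (x + y) / R + t) - 2 * σ ((x + y) / R + t)
      - σ (2 * (x - y) / R + t) + 2 * σ ((x - y) / R + t))

noncomputable def reluNetwork (σ : ℝ → ℝ) (tσ tid R x : ℝ) : ℝ :=
  productNetwork σ tσ R (identityNetwork σ tid R x) (σ (R * x))

section Networks

variable {σ : ℝ → ℝ} {t R M : ℝ}

theorem abs_identityNetwork_sub_le (hσ : ContDiff ℝ 2 σ) (hM : ∀ s, |deriv (deriv σ) s| ≤ M)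
    (ht : deriv σ t ≠ 0) (hR : R ≠ 0) (x : ℝ) :
    |identityNetwork σ t R x - x| ≤ M * x ^ 2 / (2 * |deriv σ t| * |R|) := by
  have htaylor := abs_sub_sub_deriv_mul_le hσ hM t (x / R + t)
  rw [add_sub_cancel_right] at htaylor
  have hsplit : identityNetwork σ t R x - x
      = R / deriv σ t * (σ (x / R + t) - σ t - deriv σ t * (x / R)) := by
    unfold identityNetwork; field_simp
  rw [hsplit, abs_mul, abs_div]
  calc |R| / |deriv σ t| * |σ (x / R + t) - σ t - deriv σ t * (x / R)|
      ≤ |R| / |deriv σ t| * (M / 2 * (x / R) ^ 2) := by gcongr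
    _ = M * x ^ 2 / (2 * |deriv σ t| * |R|) := by
      rw [div_pow, ← sq_abs R]; field_simp

theorem abs_secondDifference_sub_le (hσ : ContDiff ℝ 3 σ)
    (hM : ∀ s, |deriv (deriv (deriv σ)) s| ≤ M) (s : ℝ) :
    |σ (2 * s / R + t) - 2 * σ (s / R + t) + σ t - deriv (deriv σ) t * (s / R) ^ 2|
      ≤ 5 * M / 3 * |s / R| ^ 3 := by
  have h₁ := abs_sub_sub_deriv_mul_sub_le hσ hM t (2 * s / R + t)
  have h₂ := abs_sub_sub_deriv_mul_sub_le hσ hM t (s / R + t)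
  rw [add_sub_cancel_right, mul_div_assoc, abs_mul, abs_two] at h₁
  rw [add_sub_cancel_right] at h₂
  calc _ = |(σ (2 * s / R + t) - σ t - deriv σ t * (2 * (s / R))
          - deriv (deriv σ) t / 2 * (2 * (s / R)) ^ 2)
        - 2 * (σ (s / R + t) - σ t - deriv σ t * (s / R)
          - deriv (deriv σ) t / 2 * (s / R) ^ 2)| := by ring_nf
    _ ≤ M / 6 * (2 * |s / R|) ^ 3 + 2 * (M / 6 * |s / R| ^ 3) := by
      refine (abs_sub _ _).trans (add_le_add ?_ ?_)
      · simpa only [mul_div_assoc] using h₁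
      · rw [abs_mul, abs_two]; gcongr
    _ = 5 * M / 3 * |s / R| ^ 3 := by ring

theorem abs_productNetwork_sub_mul_le (hσ : ContDiff ℝ 3 σ)
    (hM : ∀ s, |deriv (deriv (deriv σ)) s| ≤ M) (ht : deriv (deriv σ) t ≠ 0) (hR : R ≠ 0)
    (x y : ℝ) :
    |productNetwork σ t R x y - x * y|
      ≤ 5 * M * (|x + y| ^ 3 + |x - y| ^ 3) / (12 * |deriv (deriv σ) t| * |R|) := by
  have hplus := abs_secondDifference_sub_le (R := R) (t := t) hσ hM (x + y)
  have hminus := abs_secondDifference_sub_le (R := R) (t := t) hσ hM (x - y)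
  unfold productNetwork
  set c := deriv (deriv σ) t
  have hsplit : R ^ 2 / (4 * c) *
      (σ (2 * (x + y) / R + t) - 2 * σ ((x + y) / R + t)
        - σ (2 * (x - y) / R + t) + 2 * σ ((x - y) / R + t)) - x * y = R ^ 2 / (4 * c) *
      ((σ (2 * (x + y) / R + t) - 2 * σ ((x + y) / R + t) + σ t - c * ((x + y) / R) ^ 2)
        - (σ (2 * (x - y) / R + t) - 2 * σ ((x - y) / R + t) + σ t - c * ((x - y) / R) ^ 2)) := by
    field_simp; ring
  rw [hsplit, abs_mul, abs_div, abs_mul, abs_pow, abs_of_pos (by norm_num : (0 : ℝ) < 4)]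
  calc |R| ^ 2 / (4 * |c|) * |_ - _|
      ≤ |R| ^ 2 / (4 * |c|) * (5 * M / 3 * |(x + y) / R| ^ 3 + 5 * M / 3 * |(x - y) / R| ^ 3) := by
        gcongr; exact (abs_sub _ _).trans (add_le_add hplus hminus)
    _ = 5 * M * (|x + y| ^ 3 + |x - y| ^ 3) / (12 * |c| * |R|) := by
        simp only [abs_div, div_pow]; field_simp; ring

theorem abs_mul_apply_mul_sub_max_le (hpos : ∀ y, 0 < y → |σ y - 1| ≤ 1 / y)
    (hneg : ∀ y, y < 0 → |σ y| ≤ 1 / |y|) (hR : 0 < R) (x : ℝ) :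
    |x * σ (R * x) - max x 0| ≤ 1 / R := by
  rcases lt_trichotomy x 0 with hx | rfl | hx
  · calc |x * σ (R * x) - max x 0| = |x| * |σ (R * x)| := by
          rw [max_eq_right hx.le, sub_zero, abs_mul]
      _ ≤ |x| * (1 / |R * x|) := by gcongr; exact hneg _ (mul_neg_of_pos_of_neg hR hx)
      _ = 1 / R := by
        have : |x| ≠ 0 := abs_ne_zero.mpr hx.ne
        rw [abs_mul, abs_of_pos hR]; field_simp
  · simpa using hR.le
  · calc |x * σ (R * x) - max x 0| = x * |σ (R * x) - 1| := by
          rw [max_eq_left hx.le, ← abs_of_pos hx, ← abs_mul, abs_of_pos hx]; ring_nf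
      _ ≤ x * (1 / (R * x)) := by gcongr; exact hpos _ (mul_pos hR hx)
      _ = 1 / R := by field_simp

end Networks

section ReLU

variable {σ : ℝ → ℝ} {tσ tid R a M₂ M₃ : ℝ}

theorem abs_identityNetwork_sub_le_of_abs_le (hσ : ContDiff ℝ 2 σ)
    (hM₂ : ∀ s, |deriv (deriv σ) s| ≤ M₂) (hid : deriv σ tid ≠ 0) (hR₀ : 0 < R) {x : ℝ}
    (hx : |x| ≤ a) :
    |identityNetwork σ tid R x - x| ≤ M₂ * a ^ 2 / (2 * |deriv σ tid| * R) := by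
  have hM₂₀ : 0 ≤ M₂ := (abs_nonneg _).trans (hM₂ 0)
  refine (abs_identityNetwork_sub_le hσ hM₂ hid hR₀.ne' x).trans ?_
  rw [abs_of_pos hR₀, ← sq_abs x]
  gcongr

theorem abs_reluNetwork_sub_max_le (hσ : ContDiff ℝ 3 σ) (hσ₁ : ∀ y, |σ y| ≤ 1)
    (hpos : ∀ y, 0 < y → |σ y - 1| ≤ 1 / y) (hneg : ∀ y, y < 0 → |σ y| ≤ 1 / |y|)
    (hM₂ : ∀ s, |deriv (deriv σ) s| ≤ M₂) (hM₃ : ∀ s, |deriv (deriv (deriv σ)) s| ≤ M₃)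
    (hid : deriv σ tid ≠ 0) (htσ : deriv (deriv σ) tσ ≠ 0) (ha : 1 ≤ a) (hR₀ : 0 < R)
    (hR : M₂ * a / (2 * |deriv σ tid|) ≤ R) {x : ℝ} (hx : |x| ≤ a) :
    |reluNetwork σ tσ tid R x - max x 0|
      ≤ 5 * M₃ * (2 * (3 * a) ^ 3) / (12 * |deriv (deriv σ) tσ| * R)
        + M₂ * a ^ 2 / (2 * |deriv σ tid| * R) + 1 / R := by
  set u := identityNetwork σ tid R x
  set v := σ (R * x)
  have hu := abs_identityNetwork_sub_le_of_abs_le (hσ.of_le (by norm_num)) hM₂ hid hR₀ hx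
  have hu_le : |u - x| ≤ a := hu.trans <| by
    have hd : 0 < |deriv σ tid| := abs_pos.mpr hid
    rw [div_le_iff₀ (by positivity)]
    calc M₂ * a ^ 2 = M₂ * a / (2 * |deriv σ tid|) * (2 * |deriv σ tid| * a) := by field_simp
      _ ≤ R * (2 * |deriv σ tid| * a) := by gcongr
      _ = a * (2 * |deriv σ tid| * R) := by ring
  have huv : |u| + |v| ≤ 3 * a := by linarith [abs_sub_abs_le_abs_sub u x, hσ₁ (R * x)]
  have hmul : |productNetwork σ tσ R u v - u * v|
      ≤ 5 * M₃ * (2 * (3 * a) ^ 3) / (12 * |deriv (deriv σ) tσ| * R) := by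
    have hM₃₀ : 0 ≤ M₃ := (abs_nonneg _).trans (hM₃ 0)
    refine (abs_productNetwork_sub_mul_le hσ hM₃ htσ hR₀.ne' u v).trans ?_
    rw [abs_of_pos hR₀, two_mul]
    gcongr <;> linarith [abs_add_le u v, abs_sub u v]
  calc |reluNetwork σ tσ tid R x - max x 0|
      = |(productNetwork σ tσ R u v - u * v) + (u - x) * v + (x * v - max x 0)| := by
        unfold reluNetwork; congr 1; ring
    _ ≤ |productNetwork σ tσ R u v - u * v| + |u - x| * |v| + |x * v - max x 0| := by
        rw [← abs_mul]; exact abs_add_three _ _ _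
    _ ≤ _ := by
        gcongr
        · exact (mul_le_of_le_one_right (abs_nonneg _) (hσ₁ _)).trans hu
        · exact abs_mul_apply_mul_sub_max_le hpos hneg hR₀ x

end ReLU

theorem relu_error_budget {a R M₂ M₃ d₁ d₂ : ℝ} (ha : 1 ≤ a) (hR : 0 < R) (hd₁ : 0 < d₁)
    (hd₂ : 0 < d₂) :
    5 * M₃ * (2 * (3 * a) ^ 3) / (12 * d₂ * R) + M₂ * a ^ 2 / (2 * d₁ * R) + 1 / R
      ≤ 56 * (max (max M₂ M₃) 1 / min (min (2 * d₁) d₂) 1) * a ^ 3 * (1 / R) := by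
  set M := max (max M₂ M₃) 1
  set m := min (min (2 * d₁) d₂) 1
  have hM₂ : M₂ ≤ M := (le_max_left _ _).trans (le_max_left _ _)
  have hM₃ : M₃ ≤ M := (le_max_right _ _).trans (le_max_left _ _)
  have hM : 1 ≤ M := le_max_right _ _
  have hm₁ : m ≤ 2 * d₁ := (min_le_left _ _).trans (min_le_left _ _)
  have hm₂ : m ≤ d₂ := (min_le_left _ _).trans (min_le_right _ _)
  have hm : 0 < m := lt_min (lt_min (by positivity) hd₂) one_pos
  have ha₂ : a ^ 2 ≤ a ^ 3 := pow_le_pow_right₀ ha (by norm_num)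
  have ha₃ : 1 ≤ a ^ 3 := one_le_pow₀ ha
  have hK : 0 ≤ M * a ^ 3 / (m * R) := by positivity
  have h₁ : 5 * M₃ * (2 * (3 * a) ^ 3) / (12 * d₂ * R) ≤ 45 / 2 * (M * a ^ 3 / (m * R)) := by
    rw [show 5 * M₃ * (2 * (3 * a) ^ 3) / (12 * d₂ * R) = 45 / 2 * (M₃ * a ^ 3 / (d₂ * R)) by
      field_simp; ring]
    gcongr
  have h₂ : M₂ * a ^ 2 / (2 * d₁ * R) ≤ M * a ^ 3 / (m * R) := by gcongr
  have h₃ : 1 / R ≤ M * a ^ 3 / (m * R) := by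
    rw [div_le_div_iff₀ hR (by positivity)]
    calc 1 * (m * R) ≤ 1 * R := by
          rw [one_mul, one_mul]; exact mul_le_of_le_one_left hR.le (min_le_right _ _)
      _ ≤ M * a ^ 3 * R := by gcongr; nlinarith
  calc _ ≤ 45 / 2 * (M * a ^ 3 / (m * R)) + M * a ^ 3 / (m * R) + M * a ^ 3 / (m * R) := by
        gcongr
    _ ≤ 56 * (M * a ^ 3 / (m * R)) := by linarith
    _ = 56 * (M / m) * a ^ 3 * (1 / R) := by field_simp

theorem abs_le_supNorm {g : ℝ → ℝ} (hg : ∃ B, ∀ x, |g x| ≤ B) (x : ℝ) : |g x| ≤ supNorm g := by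
  obtain ⟨B, hB⟩ := hg
  exact le_ciSup (f := fun x => |g x|) ⟨B, by rintro _ ⟨y, rfl⟩; exact hB y⟩ x

namespace TwoAdmissible

variable {σ : ℝ → ℝ} {tσ : ℝ}

theorem abs_le_one (hσ : TwoAdmissible σ tσ) (y : ℝ) : |σ y| ≤ 1 :=
  abs_le.mpr ⟨by linarith [(hσ.1 y).1], (hσ.1 y).2⟩

theorem abs_deriv_deriv_le (hσ : TwoAdmissible σ tσ) (x : ℝ) :
    |deriv (deriv σ) x| ≤ supNorm (deriv (deriv σ)) := by
  simpa [iteratedDeriv_eq_iterate] using abs_le_supNorm (hσ.2.2.2.2.1 2 (by norm_num)) x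

theorem abs_deriv_deriv_deriv_le (hσ : TwoAdmissible σ tσ) (x : ℝ) :
    |deriv (deriv (deriv σ)) x| ≤ supNorm (deriv (deriv (deriv σ))) := by
  simpa [iteratedDeriv_eq_iterate] using abs_le_supNorm (hσ.2.2.2.2.1 3 le_rfl) x

end TwoAdmissible

/-- approximation of the ReLU function `x ↦ max{x,0}` by the network
`f_ReLU(x) = f_mult(f_id(x), σ(R·x))`. -/
theorem relu_network_approx (σ : ℝ → ℝ) (tσ tid : ℝ) (hσ : TwoAdmissible σ tσ)
    (htid : deriv σ tid ≠ 0)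
    (R a : ℝ) (ha : 1 ≤ a)
    (hR : supNorm (deriv (deriv σ)) * a / (2 * |deriv σ tid|) ≤ R)
    (f_id : ℝ → ℝ)
    (hfid : ∀ x : ℝ, f_id x = (R / deriv σ tid) * (σ (x / R + tid) - σ tid))
    (f_mult : ℝ → ℝ → ℝ)
    (hfm : ∀ x y : ℝ, f_mult x y = (R ^ 2 / (4 * deriv (deriv σ) tσ)) *
      (σ (2 * (x + y) / R + tσ) - 2 * σ ((x + y) / R + tσ)
        - σ (2 * (x - y) / R + tσ) + 2 * σ ((x - y) / R + tσ)))
    (f_ReLU : ℝ → ℝ)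
    (hrelu : ∀ x : ℝ, f_ReLU x = f_mult (f_id x) (σ (R * x))) :
    ∀ x ∈ Set.Icc (-a) a,
      |f_ReLU x - max x 0| ≤
        56 * (max (max (supNorm (deriv (deriv σ))) (supNorm (deriv (deriv (deriv σ))))) 1
          / min (min (2 * |deriv σ tid|) (|deriv (deriv σ) tσ|)) 1) * a ^ 3 * (1 / R) := by
  obtain rfl : f_id = identityNetwork σ tid R := funext hfid
  obtain rfl : f_mult = productNetwork σ tσ R := funext₂ hfm
  have hM₂ := hσ.abs_deriv_deriv_le
  have hM₃ := hσ.abs_deriv_deriv_deriv_le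
  have hσ₁ := hσ.abs_le_one
  obtain ⟨-, -, -, hσ₃, -, -, htσ, hpos, hneg⟩ := hσ
  have hd₁ : 0 < |deriv σ tid| := abs_pos.mpr htid
  have hd₂ : 0 < |deriv (deriv σ) tσ| := abs_pos.mpr htσ
  have hR₀ : 0 < R := lt_of_lt_of_le (by have := hd₂.trans_le (hM₂ tσ); positivity) hR
  intro x hx
  rw [hrelu]
  exact (abs_reluNetwork_sub_max_le hσ₃ hσ₁ hpos hneg hM₂ hM₃ htid htσ ha hR₀
    hR (abs_le.mpr hx)).trans (relu_error_budget ha hR₀ hd₁ hd₂)
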